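/- Let A₀, A₁ be disjoint compact convex sets of density matrices on a d-dimensional Hilbert space. Then there exists a POVM {M₀, M₁} (i.e., 0 ≤ M₀, M₁ ≤ id, M₀ + M₁ = id) such that tr(σ₀ M₀) + tr(σ₁ M₁) > 1 for all σ₀ ∈ A₀ and σ₁ ∈ A₁. -/

import Mathlib

/-!
Hahn–Banach separates the compact convex set `A₀` from the closed convex set `A₁` by a real
functional, which on Hermitian matrices is `σ ↦ re tr(σ H)` for a Hermitian `H`. The measurement
`M₀ = 1/2 - t H`, `M₁ = 1/2 + t H` is a POVM once `t ‖H‖ ≤ 1/2`, and for density matrices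
`tr(σ₀ M₀) + tr(σ₁ M₁) = 1 + t (re tr(σ₁ H) - re tr(σ₀ H)) > 1`.
-/

open scoped ComplexOrder
open Matrix

variable {n : Type*} [Fintype n] [DecidableEq n]

theorem Matrix.exists_trace_mul_eq {R : Type*} [CommSemiring R] (g : Matrix n n R →ₗ[R] R) :
    ∃ K : Matrix n n R, ∀ σ, g σ = (σ * K).trace := by
  refine ⟨of fun j i => g (single i j 1), fun σ => ?_⟩
  have hσ : σ = ∑ i, ∑ j, σ i j • single i j 1 := by
    simpa [smul_single] using matrix_eq_sum_single σ
  conv_lhs => rw [hσ]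
  simp only [map_sum, map_smul, smul_eq_mul, trace, diag, mul_apply, of_apply]

theorem Matrix.IsHermitian.re_trace_mul_add_conjTranspose {𝕜 : Type*} [RCLike 𝕜]
    {σ : Matrix n n 𝕜} (hσ : σ.IsHermitian) (K : Matrix n n 𝕜) :
    RCLike.re (σ * (K + Kᴴ)).trace = 2 * RCLike.re (σ * K).trace := by
  have hconj : (σ * Kᴴ).trace = star (σ * K).trace := by
    rw [← trace_conjTranspose, conjTranspose_mul, hσ.eq, trace_mul_comm]
  rw [mul_add, trace_add, hconj, map_add, RCLike.star_def, RCLike.conj_re]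
  ring

instance Matrix.locallyConvexSpace {m 𝕜 E : Type*} [Semiring 𝕜] [PartialOrder 𝕜]
    [AddCommMonoid E] [Module 𝕜 E] [TopologicalSpace E] [LocallyConvexSpace 𝕜 E] :
    LocallyConvexSpace 𝕜 (Matrix m n E) :=
  inferInstanceAs (LocallyConvexSpace 𝕜 (m → n → E))

theorem Matrix.exists_isHermitian_re_trace_mul_lt {𝕜 : Type*} [RCLike 𝕜]
    {A₀ A₁ : Set (Matrix n n 𝕜)}
    (hA₀ : ∀ σ ∈ A₀, σ.IsHermitian) (hA₁ : ∀ σ ∈ A₁, σ.IsHermitian)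
    (hc₀ : IsCompact A₀) (hv₀ : Convex ℝ A₀) (hc₁ : IsClosed A₁) (hv₁ : Convex ℝ A₁)
    (hdisj : Disjoint A₀ A₁) :
    ∃ H : Matrix n n 𝕜, H.IsHermitian ∧
      ∀ σ₀ ∈ A₀, ∀ σ₁ ∈ A₁, RCLike.re (σ₀ * H).trace < RCLike.re (σ₁ * H).trace := by
  obtain ⟨f, u, v, hfu, huv, hfv⟩ :=
    RCLike.geometric_hahn_banach_compact_closed (𝕜 := 𝕜) hv₀ hc₀ hv₁ hc₁ hdisj
  obtain ⟨K, hK⟩ := exists_trace_mul_eq f.toLinearMap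
  refine ⟨K + Kᴴ, isHermitian_add_transpose_self K, fun σ₀ h₀ σ₁ h₁ => ?_⟩
  have hf₀ : RCLike.re (σ₀ * K).trace < u := hK σ₀ ▸ hfu σ₀ h₀
  have hf₁ : v < RCLike.re (σ₁ * K).trace := hK σ₁ ▸ hfv σ₁ h₁
  rw [(hA₀ σ₀ h₀).re_trace_mul_add_conjTranspose, (hA₁ σ₁ h₁).re_trace_mul_add_conjTranspose]
  linarith

theorem IsSelfAdjoint.algebraMap_add_nonneg {A : Type*} [CStarAlgebra A] [PartialOrder A]
    [StarOrderedRing A] {a : A} (ha : IsSelfAdjoint a) {r : ℝ} (hr : ‖a‖ ≤ r) :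
    0 ≤ algebraMap ℝ A r + a := by
  have h := (neg_le_neg (algebraMap_mono A hr)).trans ha.neg_algebraMap_norm_le_self
  rwa [neg_le_iff_add_nonneg'] at h

open scoped MatrixOrder Matrix.Norms.L2Operator in
theorem Matrix.IsHermitian.exists_posSemidef_algebraMap_add_smul {H : Matrix n n ℂ}
    (hH : H.IsHermitian) {r : ℝ} (hr : 0 < r) :
    ∃ t : ℝ, 0 < t ∧ ∀ s : ℝ, |s| ≤ t → (algebraMap ℝ _ r + s • H).PosSemidef := by
  refine ⟨r / (‖H‖ + 1), by positivity, fun s hs => ?_⟩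
  rw [← nonneg_iff_posSemidef]
  refine ((IsSelfAdjoint.all s).smul hH.isSelfAdjoint).algebraMap_add_nonneg ?_
  calc ‖s • H‖ = |s| * ‖H‖ := by rw [norm_smul, Real.norm_eq_abs]
    _ ≤ r / (‖H‖ + 1) * (‖H‖ + 1) := by gcongr; linarith
    _ = r := by field_simp

theorem Matrix.re_trace_mul_algebraMap_add_smul {σ : Matrix n n ℂ} (hσ : σ.trace = 1) (r s : ℝ)
    (H : Matrix n n ℂ) :
    (σ * (algebraMap ℝ _ r + s • H)).trace.re = r + s * (σ * H).trace.re := by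
  rw [mul_add, ← Algebra.commutes, ← Algebra.smul_def, mul_smul_comm, trace_add, trace_smul,
    trace_smul, hσ]
  simp

/-- for disjoint compact convex sets `A₀, A₁` of density matrices
on a `d`-dimensional Hilbert space there is a POVM `{M₀, M₁}` with
`tr(σ₀M₀) + tr(σ₁M₁) > 1` for all `σ₀ ∈ A₀`, `σ₁ ∈ A₁`. -/
theorem stmt_6 (d : ℕ) (A₀ A₁ : Set (Matrix (Fin d) (Fin d) ℂ))
    (hdens : ∀ σ ∈ A₀ ∪ A₁, σ.PosSemidef ∧ σ.trace = 1)
    (hc₀ : IsCompact A₀) (hc₁ : IsCompact A₁)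
    (hv₀ : Convex ℝ A₀) (hv₁ : Convex ℝ A₁)
    (hdisj : A₀ ∩ A₁ = ∅) :
    ∃ M₀ M₁ : Matrix (Fin d) (Fin d) ℂ,
      M₀.PosSemidef ∧ (1 - M₀).PosSemidef ∧
      M₁.PosSemidef ∧ (1 - M₁).PosSemidef ∧
      M₀ + M₁ = 1 ∧
      ∀ σ₀ ∈ A₀, ∀ σ₁ ∈ A₁, 1 < (σ₀ * M₀).trace.re + (σ₁ * M₁).trace.re := by
  have hdens₀ (σ) (h : σ ∈ A₀) := hdens σ (Or.inl h)
  have hdens₁ (σ) (h : σ ∈ A₁) := hdens σ (Or.inr h)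
  obtain ⟨H, hH, hsep⟩ := exists_isHermitian_re_trace_mul_lt
    (fun σ h => (hdens₀ σ h).1.isHermitian) (fun σ h => (hdens₁ σ h).1.isHermitian)
    hc₀ hv₀ hc₁.isClosed hv₁ (Set.disjoint_iff_inter_eq_empty.mpr hdisj)
  obtain ⟨t, ht, hpos⟩ := hH.exists_posSemidef_algebraMap_add_smul (r := 1 / 2) (by norm_num)
  set M₀ := algebraMap ℝ _ (1 / 2) + (-t) • H
  set M₁ := algebraMap ℝ _ (1 / 2) + t • H
  have hsum : M₀ + M₁ = 1 := by
    rw [add_add_add_comm, ← map_add, ← add_smul]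
    norm_num
  have hM₀ : M₀.PosSemidef := hpos (-t) (by rw [abs_neg, abs_of_pos ht])
  have hM₁ : M₁.PosSemidef := hpos t (abs_of_pos ht).le
  refine ⟨M₀, M₁, hM₀, ?_, hM₁, ?_, hsum, fun σ₀ h₀ σ₁ h₁ => ?_⟩
  · rwa [← hsum, add_sub_cancel_left]
  · rwa [← hsum, add_sub_cancel_right]
  have hgap := mul_lt_mul_of_pos_left (hsep σ₀ h₀ σ₁ h₁) ht
  simp only [RCLike.re_to_complex] at hgap
  rw [re_trace_mul_algebraMap_add_smul (hdens₀ σ₀ h₀).2,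
    re_trace_mul_algebraMap_add_smul (hdens₁ σ₁ h₁).2]
  linarith
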